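/- Under the prohibitive-closure calculus, a strictly subsumed prohibition adds an exception to a permission regardless of temporal order. Formally: if N = {P, Q} where P is a permission, Q is a prohibition, Q.beh ⊆ P.beh but ¬(P.beh ⊆ Q.beh), s ∈ P.ctx ∩ Q.ctx, and b ∈ Q.beh, then impermissible1 N b s holds, for any values of P.time and Q.time. -/
import Mathlib


structure NormFrame (S B : Type*) where
  ctx : Set S
  beh : Set B
  isPermission : Bool
  time : ℕ

variable {S B : Type*}

/-- A permission `P ∈ N` is defeated at behavior `b`, situation `s`. -/
def defeated1 (N : Set (NormFrame S B)) (P : NormFrame S B) (b : B) (s : S) : Prop :=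
  ∃ Q ∈ N, Q.isPermission = false ∧ s ∈ Q.ctx ∧
    ((P.time < Q.time ∧ P.beh ⊆ Q.beh) ∨ (b ∈ Q.beh ∧ ¬ P.beh ⊆ Q.beh))

/-- Prohibitive closure permissibility. -/
def permissible1 (N : Set (NormFrame S B)) (b : B) (s : S) : Prop :=
  ∃ P ∈ N, P.isPermission = true ∧ s ∈ P.ctx ∧ b ∈ P.beh ∧ ¬ defeated1 N P b s

def impermissible1 (N : Set (NormFrame S B)) (b : B) (s : S) : Prop :=
  ¬ permissible1 N b s

/-- Permissive closure: a prohibition `Q ∈ N` is defeated at situation `s`. -/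
def defeated2 (N : Set (NormFrame S B)) (Q : NormFrame S B) (s : S) : Prop :=
  ∃ P ∈ N, P.isPermission = true ∧ Q.time < P.time ∧ s ∈ P.ctx ∧ P.beh ⊆ Q.beh

def impermissible2 (N : Set (NormFrame S B)) (b : B) (s : S) : Prop :=
  ∃ Q ∈ N, Q.isPermission = false ∧ s ∈ Q.ctx ∧ b ∈ Q.beh ∧ ¬ defeated2 N Q s

def permissible2 (N : Set (NormFrame S B)) (b : B) (s : S) : Prop :=
  ¬ impermissible2 N b s

theorem stmt3 (P Q : NormFrame S B) (hP : P.isPermission = true) (hQ : Q.isPermission = false)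
    (hsub : Q.beh ⊆ P.beh) (hnsub : ¬ P.beh ⊆ Q.beh)
    (s : S) (hs : s ∈ P.ctx ∩ Q.ctx) (b : B) (hb : b ∈ Q.beh) :
    impermissible1 ({P, Q} : Set (NormFrame S B)) b s := by
  rintro ⟨R, hR, hRperm, hRs, hRb, hRnd⟩
  rcases hR with rfl | rfl
  · exact hRnd ⟨Q, Or.inr rfl, hQ, hs.2, Or.inr ⟨hb, hnsub⟩⟩
  · simp [hQ] at hRperm
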